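/- Let λ > 0, Z positive definite d×d with Z ⪰ λI, vectors x₁,…,x_n, a ∈ ℝ^d with ‖x_t‖₂ ≤ M for all t and ∑_{t=1}^n x_tᵀ Z⁻¹ x_t ≤ d, and a sequence of drifts (θ_s)_{s=1}^{n+1} in ℝ^d. Then |∑_{t=1}^{n} (aᵀ Z⁻¹ x_t) · (x_tᵀ (θ_t − θ_{n+1}))| ≤ M ‖a‖₂ √(d n / λ) · ∑_{s=1}^{n} ‖θ_s − θ_{s+1}‖₂. -/

import Mathlib

/-!
Telescoping `θ_t - θ_{n+1} = ∑_{s=t}^{n} (θ_s - θ_{s+1})` and Cauchy–Schwarz bound every factor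
`|x_tᵀ(θ_t - θ_{n+1})|` by `M ∑_s ‖θ_s - θ_{s+1}‖`, so it remains to bound `∑_t |aᵀZ⁻¹x_t|`.
Cauchy–Schwarz for the inner product of `Z⁻¹` gives `|aᵀZ⁻¹x_t| ≤ √(aᵀZ⁻¹a) √(x_tᵀZ⁻¹x_t)`, and
Cauchy–Schwarz over `t` gives `∑_t √(x_tᵀZ⁻¹x_t) ≤ √(n d)`; finally `Z ⪰ λI` forces
`aᵀZ⁻¹a ≤ ‖a‖²/λ`.
-/

open Matrix Finset

theorem sub_eq_sum_Icc_sub {G : Type*} [AddCommGroup G] (θ : ℕ → G) {t n : ℕ} (htn : t ≤ n) :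
    θ t - θ (n + 1) = ∑ s ∈ Icc t n, (θ s - θ (s + 1)) := by
  rw [← neg_sub, ← sum_Icc_sub htn, ← sum_neg_distrib]
  simp only [neg_sub]

theorem abs_sum_mul_le_sum_abs_mul {κ : Type*} (s : Finset κ) (f g : κ → ℝ) {B : ℝ}
    (hg : ∀ k ∈ s, |g k| ≤ B) : |∑ k ∈ s, f k * g k| ≤ (∑ k ∈ s, |f k|) * B := by
  rw [sum_mul]
  refine (abs_sum_le_sum_abs _ _).trans (sum_le_sum fun k hk => ?_)
  rw [abs_mul]
  exact mul_le_mul_of_nonneg_left (hg k hk) (abs_nonneg _)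

namespace Matrix

variable {ι : Type*} [Fintype ι]

theorem PosSemidef.dotProduct_mulVec_sq_le {P : Matrix ι ι ℝ} (hP : P.PosSemidef)
    (v w : ι → ℝ) : (v ⬝ᵥ P *ᵥ w) ^ 2 ≤ (v ⬝ᵥ P *ᵥ v) * (w ⬝ᵥ P *ᵥ w) := by
  let := P.toSeminormedAddCommGroup hP
  let := P.toInnerProductSpace hP
  have h : (P *ᵥ w ⬝ᵥ star v) * (P *ᵥ w ⬝ᵥ star v) ≤ (P *ᵥ v ⬝ᵥ star v) * (P *ᵥ w ⬝ᵥ star w) :=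
    real_inner_mul_inner_self_le v w
  simpa [sq, dotProduct_comm] using h

theorem PosSemidef.abs_dotProduct_mulVec_le {P : Matrix ι ι ℝ} (hP : P.PosSemidef)
    (v w : ι → ℝ) : |v ⬝ᵥ P *ᵥ w| ≤ √(v ⬝ᵥ P *ᵥ v) * √(w ⬝ᵥ P *ᵥ w) := by
  rw [← Real.sqrt_mul (by simpa using hP.dotProduct_mulVec_nonneg v)]
  exact Real.abs_le_sqrt (hP.dotProduct_mulVec_sq_le v w)

theorem dotProduct_self_nonneg (v : ι → ℝ) : 0 ≤ v ⬝ᵥ v := by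
  simpa using dotProduct_star_self_nonneg v

theorem dotProduct_sq_le (v w : ι → ℝ) : (v ⬝ᵥ w) ^ 2 ≤ (v ⬝ᵥ v) * (w ⬝ᵥ w) := by
  classical
  simpa using PosSemidef.one.dotProduct_mulVec_sq_le v w

theorem abs_dotProduct_le (v w : ι → ℝ) : |v ⬝ᵥ w| ≤ √(v ⬝ᵥ v) * √(w ⬝ᵥ w) := by
  classical
  simpa using PosSemidef.one.abs_dotProduct_mulVec_le v w

theorem abs_dotProduct_sum_le {κ : Type*} (s : Finset κ) (y : ι → ℝ) (v : κ → ι → ℝ) :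
    |y ⬝ᵥ ∑ k ∈ s, v k| ≤ √(y ⬝ᵥ y) * ∑ k ∈ s, √(v k ⬝ᵥ v k) := by
  rw [dotProduct_sum, mul_sum]
  exact (abs_sum_le_sum_abs _ _).trans (sum_le_sum fun k _ => abs_dotProduct_le y (v k))

theorem abs_dotProduct_sub_le_mul_sum_sqrt (θ : ℕ → ι → ℝ) {y : ι → ℝ} {M : ℝ} (hM : 0 ≤ M)
    (hy : √(y ⬝ᵥ y) ≤ M) {m t n : ℕ} (hmt : m ≤ t) (htn : t ≤ n) :
    |y ⬝ᵥ (θ t - θ (n + 1))| ≤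
      M * ∑ s ∈ Icc m n, √((θ s - θ (s + 1)) ⬝ᵥ (θ s - θ (s + 1))) := by
  rw [sub_eq_sum_Icc_sub θ htn]
  refine (abs_dotProduct_sum_le _ _ _).trans
    (mul_le_mul hy ?_ (sum_nonneg fun _ _ => Real.sqrt_nonneg _) hM)
  exact sum_le_sum_of_subset_of_nonneg (Icc_subset_Icc_left hmt) fun _ _ _ => Real.sqrt_nonneg _

theorem PosSemidef.sum_abs_dotProduct_mulVec_le {κ : Type*} {P : Matrix ι ι ℝ}
    (hP : P.PosSemidef) (s : Finset κ) (a : ι → ℝ) (x : κ → ι → ℝ) :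
    ∑ k ∈ s, |a ⬝ᵥ P *ᵥ x k| ≤
      √(a ⬝ᵥ P *ᵥ a) * (√(#s : ℝ) * √(∑ k ∈ s, x k ⬝ᵥ P *ᵥ x k)) := by
  have hcs := Real.sum_sqrt_mul_sqrt_le s (f := fun _ => (1 : ℝ))
    (g := fun k => x k ⬝ᵥ P *ᵥ x k) (fun _ => zero_le_one)
    fun k => by simpa using hP.dotProduct_mulVec_nonneg (x k)
  simp only [Real.sqrt_one, one_mul, sum_const, nsmul_eq_mul, mul_one] at hcs
  calc ∑ k ∈ s, |a ⬝ᵥ P *ᵥ x k|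
      ≤ ∑ k ∈ s, √(a ⬝ᵥ P *ᵥ a) * √(x k ⬝ᵥ P *ᵥ x k) :=
        sum_le_sum fun k _ => hP.abs_dotProduct_mulVec_le a (x k)
    _ ≤ _ := by
        rw [← mul_sum]
        exact mul_le_mul_of_nonneg_left hcs (Real.sqrt_nonneg _)

-- With `b = Z⁻¹ *ᵥ a` and `q = a ⬝ᵥ Z⁻¹ *ᵥ a = b ⬝ᵥ a`: `λ ‖b‖² ≤ b ⬝ᵥ Z *ᵥ b = q`, so
-- Cauchy–Schwarz `q² ≤ ‖b‖² ‖a‖²` gives `λ q² ≤ q ‖a‖²`.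
theorem PosDef.dotProduct_inv_mulVec_le [DecidableEq ι] {Z : Matrix ι ι ℝ} (hZ : Z.PosDef)
    {lam : ℝ} (hlam : 0 < lam) (hlow : (Z - lam • (1 : Matrix ι ι ℝ)).PosSemidef)
    (a : ι → ℝ) : a ⬝ᵥ Z⁻¹ *ᵥ a ≤ (a ⬝ᵥ a) / lam := by
  set b := Z⁻¹ *ᵥ a
  have hZb : Z *ᵥ b = a := by
    rw [mulVec_mulVec, mul_nonsing_inv _ hZ.det_pos.ne'.isUnit, one_mulVec]
  have hq : a ⬝ᵥ Z⁻¹ *ᵥ a = b ⬝ᵥ a := dotProduct_comm _ _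
  have hlam_b : lam * (b ⬝ᵥ b) ≤ b ⬝ᵥ a := by
    have hlow_b := hlow.dotProduct_mulVec_nonneg b
    simp only [star_trivial, sub_mulVec, smul_mulVec, one_mulVec, hZb, dotProduct_sub,
      dotProduct_smul, smul_eq_mul] at hlow_b
    linarith
  have hq_nonneg : 0 ≤ b ⬝ᵥ a := (mul_nonneg hlam.le (dotProduct_self_nonneg b)).trans hlam_b
  have hsq : (b ⬝ᵥ a) ^ 2 * lam ≤ (b ⬝ᵥ a) * (a ⬝ᵥ a) := by
    nlinarith [dotProduct_sq_le b a, dotProduct_self_nonneg a]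
  rw [hq, le_div_iff₀ hlam]
  rcases hq_nonneg.eq_or_lt with hq0 | hq0
  · rw [← hq0, zero_mul]
    exact dotProduct_self_nonneg a
  · nlinarith

end Matrix

theorem drifting_term_bound_general (d n : ℕ) (lam M : ℝ) (hlam : 0 < lam)
    (Z : Matrix (Fin d) (Fin d) ℝ) (hZ : Z.PosDef)
    (hlow : (Z - lam • (1 : Matrix (Fin d) (Fin d) ℝ)).PosSemidef)
    (x : ℕ → Fin d → ℝ) (a : Fin d → ℝ)
    (hx : ∀ t, Real.sqrt (x t ⬝ᵥ x t) ≤ M)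
    (hsum : ∑ t ∈ Finset.Icc 1 n, x t ⬝ᵥ Z⁻¹ *ᵥ x t ≤ (d : ℝ))
    (θ : ℕ → Fin d → ℝ) :
    |∑ t ∈ Finset.Icc 1 n,
        (a ⬝ᵥ Z⁻¹ *ᵥ x t) * (x t ⬝ᵥ (θ t - θ (n + 1)))| ≤
      M * Real.sqrt (a ⬝ᵥ a) * Real.sqrt (d * n / lam) *
        ∑ s ∈ Finset.Icc 1 n, Real.sqrt ((θ s - θ (s + 1)) ⬝ᵥ (θ s - θ (s + 1))) := by
  have hM : 0 ≤ M := (Real.sqrt_nonneg _).trans (hx 0)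
  set D := ∑ s ∈ Icc 1 n, √((θ s - θ (s + 1)) ⬝ᵥ (θ s - θ (s + 1)))
  have hdrift : ∀ t ∈ Icc 1 n, |x t ⬝ᵥ (θ t - θ (n + 1))| ≤ M * D := fun t ht =>
    abs_dotProduct_sub_le_mul_sum_sqrt θ hM (hx t) (mem_Icc.mp ht).1 (mem_Icc.mp ht).2
  have hweights : ∑ t ∈ Icc 1 n, |a ⬝ᵥ Z⁻¹ *ᵥ x t| ≤ √(a ⬝ᵥ a) * √(d * n / lam) :=
    calc ∑ t ∈ Icc 1 n, |a ⬝ᵥ Z⁻¹ *ᵥ x t|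
        ≤ √(a ⬝ᵥ Z⁻¹ *ᵥ a) * (√(n : ℝ) * √(∑ t ∈ Icc 1 n, x t ⬝ᵥ Z⁻¹ *ᵥ x t)) := by
          simpa using hZ.inv.posSemidef.sum_abs_dotProduct_mulVec_le (Icc 1 n) a x
      _ ≤ √((a ⬝ᵥ a) / lam) * (√(n : ℝ) * √(d : ℝ)) := by
          gcongr
          exact hZ.dotProduct_inv_mulVec_le hlam hlow a
      _ = √(a ⬝ᵥ a) * √(d * n / lam) := by
          rw [← Real.sqrt_mul (Nat.cast_nonneg _), ← Real.sqrt_mul' _ (by positivity),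
            ← Real.sqrt_mul (dotProduct_self_nonneg a)]
          ring_nf
  calc _ ≤ (∑ t ∈ Icc 1 n, |a ⬝ᵥ Z⁻¹ *ᵥ x t|) * (M * D) :=
        abs_sum_mul_le_sum_abs_mul _ _ _ hdrift
    _ ≤ (√(a ⬝ᵥ a) * √(d * n / lam)) * (M * D) :=
        mul_le_mul_of_nonneg_right hweights
          (mul_nonneg hM (sum_nonneg fun _ _ => Real.sqrt_nonneg _))
    _ = M * √(a ⬝ᵥ a) * √(d * n / lam) * D := by ring

theorem drifting_term_bound (d n : ℕ) (lam M A : ℝ) (hlam : 0 < lam)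
    (Z : Matrix (Fin d) (Fin d) ℝ) (hZ : Z.PosDef)
    (hlow : (Z - lam • (1 : Matrix (Fin d) (Fin d) ℝ)).PosSemidef)
    (x : ℕ → Fin d → ℝ) (a : Fin d → ℝ)
    (hx : ∀ t, Real.sqrt (x t ⬝ᵥ x t) ≤ M)
    (hsum : ∑ t ∈ Finset.Icc 1 n, x t ⬝ᵥ Z⁻¹ *ᵥ x t ≤ (d : ℝ))
    (θ : ℕ → Fin d → ℝ) :
    |∑ t ∈ Finset.Icc 1 n,
        (a ⬝ᵥ Z⁻¹ *ᵥ x t) * (x t ⬝ᵥ (θ t - θ (n + 1)))| ≤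
      M * Real.sqrt (a ⬝ᵥ a) * Real.sqrt (d * n / lam) *
        ∑ s ∈ Finset.Icc 1 n, Real.sqrt ((θ s - θ (s + 1)) ⬝ᵥ (θ s - θ (s + 1))) :=
  drifting_term_bound_general d n lam M hlam Z hZ hlow x a hx hsum θ
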